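/- Let H be a Hopf algebra over a commutative ring k, with coproduct Δ(h) = Σ h₍₁₎ ⊗ h₍₂₎, counit ε and antipode S, and let χ : H → k be a character, i.e. a k-algebra homomorphism. Define Δ_R : H → H ⊗_k H by Δ_R(h) = Σ h₍₁₎ ⊗ χ(S(h₍₂₎)) h₍₃₎. Then (H, Δ_R, χ) is a k-bialgebra with the original algebra structure of H: Δ_R is coassociative, χ is a counit for Δ_R (i.e. Σ χ(h₍₁₎) χ(S(h₍₂₎)) h₍₃₎ = h = Σ h₍₁₎ χ(S(h₍₂₎)) χ(h₍₃₎)), and Δ_R and χ are k-algebra homomorphisms. -/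
import Mathlib


/-!
Statement 13: For a Hopf algebra `H` over `k` with antipode `S` and a character
`χ : H → k`, the twisted coproduct `Δ_R(h) = Σ h₍₁₎ ⊗ χ(S(h₍₂₎)) h₍₃₎` together
with the counit `χ` makes the algebra `H` a `k`-bialgebra.
(Paper: Section 4.1.1, Connes–Moscovici twist.)
-/

open TensorProduct

/-- The character-twisted coproduct `Δ_R(h) = Σ h₍₁₎ ⊗ χ(S(h₍₂₎)) h₍₃₎`. -/
noncomputable def twistedComul (k H : Type*) [CommRing k] [Ring H]
    [HopfAlgebra k H] (χ : H →ₐ[k] k) : H →ₗ[k] H ⊗[k] H :=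
  (TensorProduct.map LinearMap.id
    (TensorProduct.lift
      ((LinearMap.lsmul k H).comp
        (χ.toLinearMap.comp (HopfAlgebra.antipode (R := k)))))) ∘ₗ
  (TensorProduct.map LinearMap.id (Coalgebra.comul (R := k))) ∘ₗ
  (Coalgebra.comul (R := k))

namespace TwistAux

open Coalgebra HopfAlgebra LinearMap

variable {k H : Type*} [CommRing k] [Ring H] [HopfAlgebra k H] (χ : H →ₐ[k] k)

noncomputable def g : H →ₗ[k] k := χ.toLinearMap ∘ₗ antipode (R := k)

noncomputable def L : H ⊗[k] H →ₗ[k] H :=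
  TensorProduct.lift ((LinearMap.lsmul k H).comp (g χ))

noncomputable def f : H →ₗ[k] H := L χ ∘ₗ comul

lemma L_tmul (a b : H) : L χ (a ⊗ₜ[k] b) = χ (antipode (R := k) a) • b := by
  simp [L, g]

lemma L_eq : L χ = (TensorProduct.lid k H).toLinearMap ∘ₗ (g χ).rTensor H := by
  apply TensorProduct.ext'; intro a b; simp [L, g]

lemma twistedComul_eq : twistedComul k H χ = (f χ).lTensor H ∘ₗ comul := by
  rw [twistedComul, f, L, g]
  rw [show (TensorProduct.map (LinearMap.id (M := H))
      (Coalgebra.comul (R := k))) = (Coalgebra.comul (R := k) (A := H)).lTensor H from rfl,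
    show (TensorProduct.map (LinearMap.id (M := H))
      (TensorProduct.lift ((LinearMap.lsmul k H).comp
        (χ.toLinearMap.comp (HopfAlgebra.antipode (R := k)))))) =
      (TensorProduct.lift ((LinearMap.lsmul k H).comp
        (χ.toLinearMap.comp (HopfAlgebra.antipode (R := k))))).lTensor H from rfl]
  rw [← LinearMap.comp_assoc, ← LinearMap.lTensor_comp]

/-- naturality of lid: for φ : H →ₗ M, φ ∘ lid = lid ∘ lTensor φ -/
lemma lid_nat {M N : Type*} [AddCommGroup M] [Module k M] [AddCommGroup N] [Module k N]
    (φ : M →ₗ[k] N) (t : k ⊗[k] M) :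
    φ (TensorProduct.lid k M t) = TensorProduct.lid k N (φ.lTensor k t) := by
  induction t using TensorProduct.induction_on with
  | zero => simp
  | tmul c m => simp
  | add x y hx hy => simp [hx, hy, map_add]

end TwistAux

namespace TwistAux

open Coalgebra HopfAlgebra LinearMap

variable {k H : Type*} [CommRing k] [Ring H] [HopfAlgebra k H] (χ : H →ₐ[k] k)

lemma step4 : (TensorProduct.lid k (H ⊗[k] H)).toLinearMap ∘ₗ (g χ).rTensor (H ⊗[k] H)
    ∘ₗ (TensorProduct.assoc k H H H).toLinearMap = (L χ).rTensor H := by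
  apply TensorProduct.ext_threefold; intro a b c
  simp [L_tmul, g, TensorProduct.smul_tmul']

lemma comul_f (h : H) :
    Coalgebra.comul (R := k) (f χ h) = (f χ).rTensor H (Coalgebra.comul (R := k) h) := by
  have e1 : f χ h = TensorProduct.lid k H ((g χ).rTensor H (Coalgebra.comul (R := k) h)) := by
    rw [f, comp_apply, L_eq]; rfl
  rw [e1]
  rw [lid_nat (k := k) (Coalgebra.comul (R := k) (A := H))
    ((g χ).rTensor H (Coalgebra.comul (R := k) h))]
  have e2 : (Coalgebra.comul (R := k) (A := H)).lTensor k ∘ₗ (g χ).rTensor H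
      = (g χ).rTensor (H ⊗[k] H) ∘ₗ (Coalgebra.comul (R := k) (A := H)).lTensor H := by
    rw [lTensor_comp_rTensor, rTensor_comp_lTensor]
  have e2' := LinearMap.congr_fun e2 (Coalgebra.comul (R := k) h)
  simp only [comp_apply] at e2'
  rw [e2']
  rw [← Coalgebra.coassoc_apply]
  have := LinearMap.congr_fun (step4 χ)
    ((Coalgebra.comul (R := k)).rTensor H (Coalgebra.comul (R := k) h))
  simp only [comp_apply, LinearEquiv.coe_coe] at this
  rw [this, ← comp_apply, ← rTensor_comp]
  rfl

end TwistAux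

namespace TwistAux

open Coalgebra HopfAlgebra LinearMap

variable {k H : Type*} [CommRing k] [Ring H] [HopfAlgebra k H] (χ : H →ₐ[k] k)

/-- χ ∘ f = ε -/
lemma chi_f (h : H) : χ (f χ h) = Coalgebra.counit (R := k) h := by
  have e1 : χ.toLinearMap ∘ₗ L χ
      = χ.toLinearMap ∘ₗ LinearMap.mul' k H ∘ₗ (antipode (R := k)).rTensor H := by
    apply TensorProduct.ext'; intro a b
    simp [L_tmul, g, smul_eq_mul, ← map_mul]
  have e2 := LinearMap.congr_fun e1 (Coalgebra.comul (R := k) h)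
  simp only [comp_apply, AlgHom.toLinearMap_apply] at e2
  have e3 : f χ h = L χ (Coalgebra.comul (R := k) h) := rfl
  rw [e3, e2, mul_antipode_rTensor_comul_apply, χ.commutes, Algebra.algebraMap_self_apply]

/-- the inverse winding map, as an algebra hom -/
noncomputable def U : H →ₐ[k] H :=
  ((Algebra.TensorProduct.lid k H).toAlgHom.comp
    ((Algebra.TensorProduct.map χ (AlgHom.id k H)).comp (Bialgebra.comulAlgHom k H)))

lemma U_apply (h : H) :
    U χ h = TensorProduct.lid k H
      ((χ.toLinearMap.rTensor H) (Coalgebra.comul (R := k) h)) := by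
  have : ∀ t : H ⊗[k] H, Algebra.TensorProduct.lid k H
      (Algebra.TensorProduct.map χ (AlgHom.id k H) t)
      = TensorProduct.lid k H (χ.toLinearMap.rTensor H t) := by
    intro t
    induction t using TensorProduct.induction_on with
    | zero => simp
    | tmul a b => simp
    | add x y hx hy => simp only [map_add, hx, hy]
  exact this _

end TwistAux

namespace TwistAux

open Coalgebra HopfAlgebra LinearMap

variable {k H : Type*} [CommRing k] [Ring H] [HopfAlgebra k H] (χ : H →ₐ[k] k)

lemma chi_f_map : χ.toLinearMap ∘ₗ f χ = Coalgebra.counit (R := k) :=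
  LinearMap.ext (chi_f χ)

lemma U_f (h : H) : U χ (f χ h) = h := by
  rw [U_apply, comul_f]
  have e1 := LinearMap.congr_fun
    (LinearMap.rTensor_comp H χ.toLinearMap (f χ)) (Coalgebra.comul (R := k) h)
  simp only [comp_apply] at e1
  rw [← e1, chi_f_map, Coalgebra.rTensor_counit_comul]
  simp

noncomputable def m₁ : H ⊗[k] H →ₗ[k] k :=
  χ.toLinearMap ∘ₗ LinearMap.mul' k H ∘ₗ (antipode (R := k)).lTensor H

noncomputable def Q : (H ⊗[k] H) ⊗[k] H →ₗ[k] H :=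
  TensorProduct.lift ((LinearMap.lsmul k H).comp (m₁ χ))

lemma m1_comul (h : H) : m₁ χ (Coalgebra.comul (R := k) h) = Coalgebra.counit (R := k) h := by
  simp only [m₁, comp_apply, AlgHom.toLinearMap_apply]
  rw [mul_antipode_lTensor_comul_apply, χ.commutes, Algebra.algebraMap_self_apply]

lemma stepP : (L χ) ∘ₗ (TensorProduct.lid k (H ⊗[k] H)).toLinearMap
    ∘ₗ (χ.toLinearMap).rTensor (H ⊗[k] H) ∘ₗ (TensorProduct.assoc k H H H).toLinearMap
    = Q χ := by
  apply TensorProduct.ext_threefold; intro a b c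
  simp [L_tmul, g, Q, m₁, TensorProduct.smul_tmul', smul_smul, ← map_mul]

lemma f_U (h : H) : f χ (U χ h) = h := by
  rw [U_apply]
  have e0 : f χ (TensorProduct.lid k H
      ((χ.toLinearMap.rTensor H) (Coalgebra.comul (R := k) h)))
      = L χ (Coalgebra.comul (R := k) (TensorProduct.lid k H
        ((χ.toLinearMap.rTensor H) (Coalgebra.comul (R := k) h)))) := rfl
  rw [e0, lid_nat (k := k) (Coalgebra.comul (R := k) (A := H)) _]
  have e2 : (Coalgebra.comul (R := k) (A := H)).lTensor k ∘ₗ χ.toLinearMap.rTensor H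
      = χ.toLinearMap.rTensor (H ⊗[k] H) ∘ₗ (Coalgebra.comul (R := k) (A := H)).lTensor H := by
    rw [lTensor_comp_rTensor, rTensor_comp_lTensor]
  have e2' := LinearMap.congr_fun e2 (Coalgebra.comul (R := k) h)
  simp only [comp_apply] at e2'
  rw [e2', ← Coalgebra.coassoc_apply]
  have e3 := LinearMap.congr_fun (stepP χ)
    ((Coalgebra.comul (R := k)).rTensor H (Coalgebra.comul (R := k) h))
  simp only [comp_apply, LinearEquiv.coe_coe] at e3
  rw [e3]
  -- now : Q χ (rTensor comul (comul h)) = h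
  have e4 : Q χ ((Coalgebra.comul (R := k)).rTensor H (Coalgebra.comul (R := k) h))
      = TensorProduct.lift ((LinearMap.lsmul k H).comp
          ((m₁ χ) ∘ₗ (Coalgebra.comul (R := k)))) (Coalgebra.comul (R := k) h) := by
    have : Q χ ∘ₗ (Coalgebra.comul (R := k) (A := H)).rTensor H
        = TensorProduct.lift ((LinearMap.lsmul k H).comp
            ((m₁ χ) ∘ₗ (Coalgebra.comul (R := k)))) := by
      apply TensorProduct.ext'; intro a c
      simp [Q]
    exact LinearMap.congr_fun this _
  rw [e4]
  have e5 : (m₁ χ) ∘ₗ (Coalgebra.comul (R := k) (A := H)) = Coalgebra.counit (R := k) :=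
    LinearMap.ext (m1_comul χ)
  rw [e5, ← LinearMap.lid_comp_rTensor]
  simp only [comp_apply, LinearEquiv.coe_coe, LinearMap.coe_comp, Function.comp_apply]
  rw [Coalgebra.rTensor_counit_comul]
  simp

end TwistAux

namespace TwistAux

open Coalgebra HopfAlgebra LinearMap

variable {k H : Type*} [CommRing k] [Ring H] [HopfAlgebra k H] (χ : H →ₐ[k] k)

lemma f_mul (x y : H) : f χ (x * y) = f χ x * f χ y := by
  conv_lhs => rw [← U_f χ x, ← U_f χ y]
  rw [← map_mul (U χ), f_U]

lemma f_one : f χ (1 : H) = 1 := by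
  conv_lhs => rw [show (1 : H) = U χ 1 from (map_one (U χ)).symm]
  rw [f_U]

lemma lTensor_f_mul (s t : H ⊗[k] H) :
    (f χ).lTensor H (s * t) = (f χ).lTensor H s * (f χ).lTensor H t := by
  induction s using TensorProduct.induction_on with
  | zero => simp
  | add a b ha hb => simp only [add_mul, map_add, ha, hb]
  | tmul a b =>
    induction t using TensorProduct.induction_on with
    | zero => simp
    | add c d hc hd => simp only [mul_add, map_add, hc, hd]
    | tmul c d => simp [Algebra.TensorProduct.tmul_mul_tmul, f_mul]

lemma Dh (x : H) :
    twistedComul k H χ x = (f χ).lTensor H (Coalgebra.comul (R := k) x) :=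
  LinearMap.congr_fun (twistedComul_eq χ) x

lemma s1 : TensorProduct.map (twistedComul k H χ) (LinearMap.id (M := H)) ∘ₗ (f χ).lTensor H
    = TensorProduct.map ((f χ).lTensor H) (f χ)
        ∘ₗ (Coalgebra.comul (R := k) (A := H)).rTensor H := by
  apply TensorProduct.ext'; intro a b
  simp [Dh]

lemma s2 : (TensorProduct.assoc k H H H).toLinearMap
      ∘ₗ TensorProduct.map ((f χ).lTensor H) (f χ)
    = TensorProduct.map LinearMap.id (TensorProduct.map (f χ) (f χ))
      ∘ₗ (TensorProduct.assoc k H H H).toLinearMap := by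
  apply TensorProduct.ext_threefold; intro a b c
  simp

lemma s3 : TensorProduct.map (LinearMap.id (M := H)) (twistedComul k H χ) ∘ₗ (f χ).lTensor H
    = TensorProduct.map LinearMap.id (TensorProduct.map (f χ) (f χ))
      ∘ₗ (Coalgebra.comul (R := k) (A := H)).lTensor H := by
  apply TensorProduct.ext'; intro a b
  have : twistedComul k H χ (f χ b)
      = TensorProduct.map (f χ) (f χ) (Coalgebra.comul (R := k) b) := by
    rw [Dh, comul_f]
    exact LinearMap.congr_fun (lTensor_comp_rTensor H (f χ) (f χ)) _
  simp [this]

lemma main_coassoc (h : H) :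
    (TensorProduct.assoc k H H H)
      ((TensorProduct.map (twistedComul k H χ) LinearMap.id) (twistedComul k H χ h))
    = (TensorProduct.map LinearMap.id (twistedComul k H χ)) (twistedComul k H χ h) := by
  rw [Dh χ h]
  have e1 := LinearMap.congr_fun (s1 χ) (Coalgebra.comul (R := k) h)
  have e2 := LinearMap.congr_fun (s2 χ)
    ((Coalgebra.comul (R := k) (A := H)).rTensor H (Coalgebra.comul (R := k) h))
  have e3 := LinearMap.congr_fun (s3 χ) (Coalgebra.comul (R := k) h)
  simp only [comp_apply, LinearEquiv.coe_coe] at e1 e2 e3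
  rw [e1, e2, Coalgebra.coassoc_apply, e3]

lemma main_counit_left (h : H) :
    (TensorProduct.lid k H)
      ((TensorProduct.map χ.toLinearMap LinearMap.id) (twistedComul k H χ h)) = h := by
  rw [Dh χ h]
  have s4 : TensorProduct.map χ.toLinearMap (LinearMap.id (M := H)) ∘ₗ (f χ).lTensor H
      = (f χ).lTensor k ∘ₗ χ.toLinearMap.rTensor H := by
    apply TensorProduct.ext'; intro a b; simp
  have e1 := LinearMap.congr_fun s4 (Coalgebra.comul (R := k) h)
  simp only [comp_apply] at e1
  rw [e1, ← lid_nat, ← U_apply, f_U]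

lemma main_counit_right (h : H) :
    (TensorProduct.rid k H)
      ((TensorProduct.map LinearMap.id χ.toLinearMap) (twistedComul k H χ h)) = h := by
  rw [Dh χ h]
  have s5 : TensorProduct.map (LinearMap.id (M := H)) χ.toLinearMap ∘ₗ (f χ).lTensor H
      = (Coalgebra.counit (R := k)).lTensor H := by
    apply TensorProduct.ext'; intro a b
    simp [chi_f]
  have e1 := LinearMap.congr_fun s5 (Coalgebra.comul (R := k) h)
  simp only [comp_apply] at e1
  rw [e1, Coalgebra.lTensor_counit_comul]
  simp

lemma main_mul (x y : H) :
    twistedComul k H χ (x * y) = twistedComul k H χ x * twistedComul k H χ y := by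
  rw [Dh, Dh, Dh, Bialgebra.comul_mul, lTensor_f_mul]

lemma main_one : twistedComul k H χ (1 : H) = 1 := by
  rw [Dh, Bialgebra.comul_one, Algebra.TensorProduct.one_def]
  simp [f_one]

end TwistAux


/-- `(H, Δ_R, χ)` is a `k`-bialgebra with the original
algebra structure of `H`. -/
theorem twistedComul_bialgebra (k H : Type*) [CommRing k] [Ring H]
    [HopfAlgebra k H] (χ : H →ₐ[k] k) :
    -- Δ_R is coassociative:
    (∀ h : H, (TensorProduct.assoc k H H H)
        ((TensorProduct.map (twistedComul k H χ) LinearMap.id) (twistedComul k H χ h))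
      = (TensorProduct.map LinearMap.id (twistedComul k H χ)) (twistedComul k H χ h)) ∧
    -- χ is a counit for Δ_R, i.e. Σ χ(h₍₁₎) χ(S(h₍₂₎)) h₍₃₎ = h = Σ h₍₁₎ χ(S(h₍₂₎)) χ(h₍₃₎):
    (∀ h : H, (TensorProduct.lid k H)
        ((TensorProduct.map χ.toLinearMap LinearMap.id) (twistedComul k H χ h)) = h) ∧
    (∀ h : H, (TensorProduct.rid k H)
        ((TensorProduct.map LinearMap.id χ.toLinearMap) (twistedComul k H χ h)) = h) ∧
    -- Δ_R is a k-algebra homomorphism: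
    (∀ x y : H, twistedComul k H χ (x * y) = twistedComul k H χ x * twistedComul k H χ y) ∧
    (twistedComul k H χ 1 = 1) ∧
    -- χ is a k-algebra homomorphism:
    (∀ x y : H, χ (x * y) = χ x * χ y) ∧ (χ 1 = 1) :=
  ⟨TwistAux.main_coassoc χ, TwistAux.main_counit_left χ, TwistAux.main_counit_right χ,
    TwistAux.main_mul χ, TwistAux.main_one χ, fun x y => map_mul χ x y, map_one χ⟩
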